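/- If L is a nonempty linear order in dLO_fp⁰⁰ (discrete, finitely presented, with no minimum and no maximum element), then there exist L₁, L₃ ∈ dLO_fp¹¹ and L₂ ∈ dLO_fp¹¹ ∪ {𝟎} such that L ≅ L₁·ω* + L₂ + L₃·ω. -/

import Mathlib

/-!
By induction along the generation of `LOfp`, every nonempty discrete finitely presented order
is isomorphic to `A·ω* + B + C·ω` with `A`, `B`, `C` in `dLO_fp¹¹ ∪ {𝟎}`, where `A` is empty
exactly when the order has a minimum and `C` exactly when it has a maximum. At a sum `X + Y`,
discreteness at the junction forces `C_X` and `A_Y` to be both empty or both nonempty, so the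
middle part `B_X + C_X·ω + A_Y·ω* + B_Y` is bounded. For products one rotates:
`(A·ω* + B + C·ω)·ω ≅ A·ω* + B + (C·ω + A·ω* + B)·ω`, and dually for `ω*`.
If the order has neither minimum nor maximum, `A` and `C` are nonempty.
-/

/-- Bundled linear orders (in `Type 0`). -/
structure BLinOrd : Type 1 where
  carrier : Type
  [str : LinearOrder carrier]

attribute [instance] BLinOrd.str

/-- The bundled linear order on a given type. -/
def BLinOrd.of (α : Type) [LinearOrder α] : BLinOrd := ⟨α⟩

/-- The class of finitely presented linear orders: the smallest class of linear orders
containing `𝟎` and `𝟏` that is closed under order isomorphism, binary order sums,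
and the anti-lexicographic products `L·ω` and `L·ω*`. -/
inductive LOfp : BLinOrd → Prop
  | empty : LOfp (BLinOrd.of (Fin 0))
  | one : LOfp (BLinOrd.of (Fin 1))
  | iso {X Y : BLinOrd} : LOfp X → Nonempty (X.carrier ≃o Y.carrier) → LOfp Y
  | add {X Y : BLinOrd} : LOfp X → LOfp Y → LOfp (BLinOrd.of (X.carrier ⊕ₗ Y.carrier))
  | mulOmega {X : BLinOrd} : LOfp X → LOfp (BLinOrd.of (ℕ ×ₗ X.carrier))
  | mulOmegaStar {X : BLinOrd} : LOfp X → LOfp (BLinOrd.of (ℕᵒᵈ ×ₗ X.carrier))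

/-- A linear order is discrete if every non-maximal element has an immediate successor
and every non-minimal element has an immediate predecessor. -/
def IsDiscreteLO (α : Type*) [LinearOrder α] : Prop :=
  (∀ a : α, (∃ b, a < b) → ∃ b, a ⋖ b) ∧ (∀ a : α, (∃ b, b < a) → ∃ b, b ⋖ a)

/-- Bounded discrete finitely presented linear orders: discrete members of `LOfp` with a
minimum element and a maximum element. -/
def dLOfp11 (X : BLinOrd) : Prop :=
  LOfp X ∧ IsDiscreteLO X.carrier ∧
    (∃ a : X.carrier, ∀ x, a ≤ x) ∧ (∃ a : X.carrier, ∀ x, x ≤ a)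

open Sum OrderDual

theorem nonempty_sumLex_iff {α β : Type*} : Nonempty (α ⊕ₗ β) ↔ Nonempty α ∨ Nonempty β :=
  nonempty_sum

theorem nonempty_prodLex_iff {α β : Type*} : Nonempty (α ×ₗ β) ↔ Nonempty α ∧ Nonempty β :=
  nonempty_prod

section LinearOrder

variable {α β ι : Type*} [LinearOrder α] [LinearOrder β] [LinearOrder ι]

def HasMin (α : Type*) [LE α] : Prop := ∃ a : α, IsBot a

def HasMax (α : Type*) [LE α] : Prop := ∃ a : α, IsTop a

theorem hasMin_of_orderBot [OrderBot α] : HasMin α := ⟨⊥, isBot_bot⟩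

theorem hasMax_of_orderTop [OrderTop α] : HasMax α := ⟨⊤, isTop_top⟩

theorem not_hasMin [NoMinOrder α] : ¬HasMin α := fun ⟨a, ha⟩ => not_isBot a ha

theorem not_hasMax [NoMaxOrder α] : ¬HasMax α := fun ⟨a, ha⟩ => not_isTop a ha

theorem OrderIso.hasMin_iff (e : α ≃o β) : HasMin α ↔ HasMin β :=
  ⟨fun ⟨a, ha⟩ => ⟨e a, fun _ => e.le_symm_apply.1 (ha _)⟩,
    fun ⟨b, hb⟩ => ⟨e.symm b, fun _ => e.symm_apply_le.2 (hb _)⟩⟩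

theorem OrderIso.hasMax_iff (e : α ≃o β) : HasMax α ↔ HasMax β :=
  e.dual.hasMin_iff

theorem hasMin_sumLex_iff : HasMin (α ⊕ₗ β) ↔ HasMin α ∨ IsEmpty α ∧ HasMin β := by
  constructor
  · rintro ⟨a | b, h⟩
    · exact .inl ⟨a, fun x => Sum.Lex.inl_le_inl_iff.1 (h (toLex (inl x)))⟩
    · exact .inr ⟨⟨fun x => Sum.Lex.not_inr_le_inl (h (toLex (inl x)))⟩,
        b, fun y => Sum.Lex.inr_le_inr_iff.1 (h (toLex (inr y)))⟩
  · rintro (⟨a, ha⟩ | ⟨hα, b, hb⟩)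
    · refine ⟨toLex (inl a), ?_⟩
      rintro (x | y)
      · exact Sum.Lex.inl_le_inl_iff.2 (ha x)
      · exact Sum.Lex.inl_le_inr a y
    · refine ⟨toLex (inr b), ?_⟩
      rintro (x | y)
      · exact isEmptyElim x
      · exact Sum.Lex.inr_le_inr_iff.2 (hb y)

theorem hasMax_sumLex_iff : HasMax (α ⊕ₗ β) ↔ HasMax β ∨ IsEmpty β ∧ HasMax α :=
  (OrderIso.sumLexDualAntidistrib α β).hasMin_iff.trans hasMin_sumLex_iff

def OrderIso.prodLexDual (α β : Type*) [Preorder α] [Preorder β] :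
    (α ×ₗ β)ᵒᵈ ≃o αᵒᵈ ×ₗ βᵒᵈ where
  toFun x := toLex (toDual (ofLex (ofDual x)).1, toDual (ofLex (ofDual x)).2)
  invFun x := toDual (toLex (ofDual (ofLex x).1, ofDual (ofLex x).2))
  left_inv _ := rfl
  right_inv _ := rfl
  map_rel_iff' := by
    simp_rw [OrderDual.forall, Lex.forall, Prod.forall]
    intro a b c d
    change toLex (toDual a, toDual b) ≤ toLex (toDual c, toDual d) ↔ _
    simp [Prod.Lex.toLex_le_toLex, eq_comm]

theorem hasMin_prodLex_iff : HasMin (ι ×ₗ α) ↔ HasMin ι ∧ HasMin α := by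
  constructor
  · rintro ⟨⟨i, a⟩, h⟩
    refine ⟨⟨i, fun j => Prod.Lex.monotone_fst_ofLex (h (toLex (j, a)))⟩, a, fun b => ?_⟩
    exact ((Prod.Lex.toLex_le_toLex.1 (h (toLex (i, b)))).resolve_left (lt_irrefl i)).2
  · rintro ⟨⟨i, hi⟩, a, ha⟩
    refine ⟨toLex (i, a), fun ⟨j, b⟩ => Prod.Lex.toLex_le_toLex.2 ?_⟩
    rcases (hi j).lt_or_eq with h | rfl
    · exact .inl h
    · exact .inr ⟨rfl, ha b⟩

theorem hasMax_prodLex_iff : HasMax (ι ×ₗ α) ↔ HasMax ι ∧ HasMax α :=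
  (OrderIso.prodLexDual ι α).hasMin_iff.trans hasMin_prodLex_iff

def SuccDiscrete (α : Type*) [Preorder α] : Prop :=
  ∀ a : α, (∃ b, a < b) → ∃ b, a ⋖ b

theorem isDiscreteLO_iff : IsDiscreteLO α ↔ SuccDiscrete α ∧ SuccDiscrete αᵒᵈ :=
  and_congr_right' <| forall_congr' fun _ => imp_congr_right fun _ =>
    exists_congr fun _ => ofDual_covBy_ofDual_iff

theorem SuccDiscrete.of_orderIso (h : SuccDiscrete α) (e : α ≃o β) : SuccDiscrete β := by
  intro b ⟨b', hb⟩
  obtain ⟨c, hc⟩ := h (e.symm b) ⟨e.symm b', e.symm.strictMono hb⟩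
  exact ⟨e c, by simpa using (apply_covBy_apply_iff e).2 hc⟩

theorem OrderIso.succDiscrete_iff (e : α ≃o β) : SuccDiscrete α ↔ SuccDiscrete β :=
  ⟨(·.of_orderIso e), (·.of_orderIso e.symm)⟩

theorem OrderIso.isDiscreteLO_iff (e : α ≃o β) : IsDiscreteLO α ↔ IsDiscreteLO β := by
  rw [_root_.isDiscreteLO_iff, _root_.isDiscreteLO_iff, e.succDiscrete_iff, e.dual.succDiscrete_iff]

theorem isDiscreteLO_of_succOrder [SuccOrder α] [PredOrder α] : IsDiscreteLO α :=
  ⟨fun _ ⟨_, h⟩ => ⟨_, Order.covBy_succ_of_not_isMax (not_isMax_of_lt h)⟩,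
    fun _ ⟨_, h⟩ => ⟨_, Order.pred_covBy_of_not_isMin (not_isMin_of_lt h)⟩⟩

namespace Sum.Lex

theorem inl_covBy_inl_iff {a b : α} : toLex (inl a : α ⊕ β) ⋖ toLex (inl b) ↔ a ⋖ b := by
  refine ⟨fun h => ⟨inl_lt_inl_iff.1 h.1, fun c h₁ h₂ => h.2 (c := toLex (inl c))
    (inl_lt_inl_iff.2 h₁) (inl_lt_inl_iff.2 h₂)⟩, fun h => ⟨inl_lt_inl_iff.2 h.1, ?_⟩⟩
  rintro (c | c) h₁ h₂
  · exact h.2 (inl_lt_inl_iff.1 h₁) (inl_lt_inl_iff.1 h₂)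
  · exact not_inr_lt_inl h₂

theorem inr_covBy_inr_iff {a b : β} : toLex (inr a : α ⊕ β) ⋖ toLex (inr b) ↔ a ⋖ b := by
  refine ⟨fun h => ⟨inr_lt_inr_iff.1 h.1, fun c h₁ h₂ => h.2 (c := toLex (inr c))
    (inr_lt_inr_iff.2 h₁) (inr_lt_inr_iff.2 h₂)⟩, fun h => ⟨inr_lt_inr_iff.2 h.1, ?_⟩⟩
  rintro (c | c) h₁ h₂
  · exact not_inr_lt_inl h₁
  · exact h.2 (inr_lt_inr_iff.1 h₁) (inr_lt_inr_iff.1 h₂)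

theorem inl_covBy_inr_iff {a : α} {b : β} :
    toLex (inl a : α ⊕ β) ⋖ toLex (inr b) ↔ IsMax a ∧ IsMin b := by
  simp only [CovBy, inl_lt_inr, true_and, Lex.forall, Sum.forall, inl_lt_inl_iff, inr_lt_inr_iff,
    isMax_iff_forall_not_lt, isMin_iff_forall_not_lt]
  tauto

end Sum.Lex

open Sum.Lex in
theorem succDiscrete_sumLex_iff :
    SuccDiscrete (α ⊕ₗ β) ↔
      SuccDiscrete α ∧ SuccDiscrete β ∧ (Nonempty β → HasMax α → HasMin β) := by
  constructor
  · intro h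
    refine ⟨fun a ⟨a', ha⟩ => ?_, fun b ⟨b', hb⟩ => ?_, fun ⟨b⟩ ⟨a, ha⟩ => ?_⟩
    · obtain ⟨c | c, hc⟩ := h (toLex (inl a)) ⟨_, inl_lt_inl_iff.2 ha⟩
      · exact ⟨c, inl_covBy_inl_iff.1 hc⟩
      · exact absurd ha ((inl_covBy_inr_iff.1 hc).1.not_lt)
    · obtain ⟨c | c, hc⟩ := h (toLex (inr b)) ⟨_, inr_lt_inr_iff.2 hb⟩
      · exact absurd hc.1 not_inr_lt_inl
      · exact ⟨c, inr_covBy_inr_iff.1 hc⟩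
    · obtain ⟨c | c, hc⟩ := h (toLex (inl a)) ⟨_, inl_lt_inr a b⟩
      · exact absurd (inl_lt_inl_iff.1 hc.1) (not_lt.2 (ha c))
      · exact ⟨c, (inl_covBy_inr_iff.1 hc).2.isBot⟩
  · rintro ⟨hα, hβ, hj⟩ (a | b) ⟨c | c, hc⟩
    · obtain ⟨d, hd⟩ := hα a ⟨c, inl_lt_inl_iff.1 hc⟩
      exact ⟨_, inl_covBy_inl_iff.2 hd⟩
    · by_cases ha : IsMax a
      · obtain ⟨m, hm⟩ := hj ⟨c⟩ ⟨a, ha.isTop⟩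
        exact ⟨_, inl_covBy_inr_iff.2 ⟨ha, hm.isMin⟩⟩
      · obtain ⟨d, hd⟩ := hα a (not_isMax_iff.1 ha)
        exact ⟨_, inl_covBy_inl_iff.2 hd⟩
    · exact absurd hc not_inr_lt_inl
    · obtain ⟨d, hd⟩ := hβ b ⟨c, inr_lt_inr_iff.1 hc⟩
      exact ⟨_, inr_covBy_inr_iff.2 hd⟩

theorem isDiscreteLO_sumLex_iff :
    IsDiscreteLO (α ⊕ₗ β) ↔ IsDiscreteLO α ∧ IsDiscreteLO β ∧
      (Nonempty α → Nonempty β → (HasMax α ↔ HasMin β)) := by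
  rw [isDiscreteLO_iff, isDiscreteLO_iff, isDiscreteLO_iff,
    (OrderIso.sumLexDualAntidistrib α β).succDiscrete_iff, succDiscrete_sumLex_iff,
    succDiscrete_sumLex_iff]
  exact ⟨fun ⟨⟨hα, hβ, hαβ⟩, hβ', hα', hβα⟩ =>
      ⟨⟨hα, hα'⟩, ⟨hβ, hβ'⟩, fun ha hb => ⟨hαβ hb, hβα ha⟩⟩,
    fun ⟨⟨hα, hα'⟩, ⟨hβ, hβ'⟩, h⟩ => ⟨⟨hα, hβ, fun hb ha => (h ⟨ha.choose⟩ hb).1 ha⟩, hβ', hα',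
      fun ha hb => (h ha ⟨hb.choose⟩).2 hb⟩⟩

open Prod.Lex in
theorem succDiscrete_prodLex_iff (hι : SuccDiscrete ι) {i₀ : ι} (hi₀ : ¬IsMax i₀) :
    SuccDiscrete (ι ×ₗ α) ↔ SuccDiscrete α ∧ (HasMax α → HasMin α) := by
  constructor
  · intro h
    refine ⟨fun a ⟨a', ha⟩ => ?_, fun ⟨a, ha⟩ => ?_⟩
    · obtain ⟨⟨j, c⟩, hc⟩ := h (toLex (i₀, a)) ⟨toLex (i₀, a'), toLex_lt_toLex.2 (.inr ⟨rfl, ha⟩)⟩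
      rcases toLex_covBy_toLex_iff.1 hc with ⟨-, hc⟩ | ⟨-, hmax, -⟩
      · exact ⟨c, hc⟩
      · exact absurd ha hmax.not_lt
    · obtain ⟨j, hj⟩ := not_isMax_iff.1 hi₀
      obtain ⟨⟨k, c⟩, hc⟩ := h (toLex (i₀, a)) ⟨toLex (j, a), toLex_lt_toLex.2 (.inl hj)⟩
      rcases toLex_covBy_toLex_iff.1 hc with ⟨-, hc⟩ | ⟨-, -, hmin⟩
      · exact absurd hc.1 (not_lt.2 (ha c))
      · exact ⟨c, hmin.isBot⟩
  · rintro ⟨hα, hmax⟩ ⟨i, a⟩ ⟨⟨j, b⟩, hlt⟩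
    by_cases ha : IsMax a
    · obtain ⟨m, hm⟩ := hmax ⟨a, ha.isTop⟩
      have hij : i < j := by
        rcases toLex_lt_toLex.1 hlt with h | ⟨-, h⟩
        · exact h
        · exact absurd h ha.not_lt
      obtain ⟨k, hk⟩ := hι i ⟨j, hij⟩
      exact ⟨toLex (k, m), toLex_covBy_toLex_iff.2 (.inr ⟨hk, ha, hm.isMin⟩)⟩
    · obtain ⟨c, hc⟩ := hα a (not_isMax_iff.1 ha)
      exact ⟨toLex (i, c), toLex_covBy_toLex_iff.2 (.inl ⟨rfl, hc⟩)⟩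

theorem isDiscreteLO_prodLex_iff [Nontrivial ι] (hι : IsDiscreteLO ι) :
    IsDiscreteLO (ι ×ₗ α) ↔ IsDiscreteLO α ∧ (HasMax α ↔ HasMin α) := by
  obtain ⟨i, j, hij⟩ := exists_pair_lt ι
  rw [isDiscreteLO_iff] at hι
  rw [isDiscreteLO_iff, isDiscreteLO_iff, (OrderIso.prodLexDual ι α).succDiscrete_iff,
    succDiscrete_prodLex_iff hι.1 (not_isMax_of_lt hij),
    succDiscrete_prodLex_iff (α := αᵒᵈ) hι.2 (isMax_toDual_iff.not.2 (not_isMin_of_lt hij))]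
  exact ⟨fun ⟨⟨hα, hmax⟩, hα', hmin⟩ => ⟨⟨hα, hα'⟩, hmax, hmin⟩,
    fun ⟨⟨hα, hα'⟩, h⟩ => ⟨⟨hα, h.1⟩, hα', h.2⟩⟩

end LinearOrder

section Rotation

variable (P Q : Type*) [LinearOrder P] [LinearOrder Q]

def OrderIso.natProdLexSumLexRotate : ℕ ×ₗ (P ⊕ₗ Q) ≃o P ⊕ₗ ℕ ×ₗ (Q ⊕ₗ P) where
  toFun x := match ofLex (ofLex x).2, (ofLex x).1 with
    | inl p, 0 => toLex (inl p)
    | inl p, n + 1 => toLex (inr (toLex (n, toLex (inr p))))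
    | inr q, n => toLex (inr (toLex (n, toLex (inl q))))
  invFun x := match ofLex x with
    | inl p => toLex (0, toLex (inl p))
    | inr y => match ofLex (ofLex y).2 with
      | inl q => toLex ((ofLex y).1, toLex (inr q))
      | inr p => toLex ((ofLex y).1 + 1, toLex (inl p))
  left_inv := by rintro ⟨_ | n, p | q⟩ <;> rfl
  right_inv := by rintro (p | ⟨n, q | p⟩) <;> rfl
  map_rel_iff' := by
    simp_rw [Lex.forall, Prod.forall, Lex.forall]
    rintro (_ | m) (a | a) (_ | n) (b | b) <;> simp [Prod.Lex.toLex_le_toLex] <;> omega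

def OrderIso.natDualProdLexSumLexRotate : ℕᵒᵈ ×ₗ (P ⊕ₗ Q) ≃o (ℕᵒᵈ ×ₗ (Q ⊕ₗ P)) ⊕ₗ Q where
  toFun x := match ofLex (ofLex x).2, ofDual (ofLex x).1 with
    | inr q, 0 => toLex (inr q)
    | inr q, n + 1 => toLex (inl (toLex (toDual n, toLex (inl q))))
    | inl p, n => toLex (inl (toLex (toDual n, toLex (inr p))))
  invFun x := match ofLex x with
    | inr q => toLex (toDual 0, toLex (inr q))
    | inl y => match ofLex (ofLex y).2 with
      | inr p => toLex ((ofLex y).1, toLex (inl p))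
      | inl q => toLex (toDual (ofDual (ofLex y).1 + 1), toLex (inr q))
  left_inv := by rintro ⟨_ | n, p | q⟩ <;> rfl
  right_inv := by rintro (⟨n, q | p⟩ | q) <;> rfl
  map_rel_iff' := by
    simp_rw [Lex.forall, Prod.forall, OrderDual.forall, Lex.forall]
    rintro (_ | m) (a | a) (_ | n) (b | b) <;>
      simp [Prod.Lex.toLex_le_toLex, -toDual_add, -toDual_zero, -toDual_one] <;> omega

end Rotation

def dLOfp11OrEmpty (X : BLinOrd) : Prop :=
  LOfp X ∧ IsDiscreteLO X.carrier ∧ (Nonempty X.carrier → HasMin X.carrier ∧ HasMax X.carrier)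

namespace dLOfp11OrEmpty

variable {A B C X Y : BLinOrd}

theorem dLOfp11 (h : dLOfp11OrEmpty X) (hne : Nonempty X.carrier) : dLOfp11 X :=
  ⟨h.1, h.2.1, h.2.2 hne⟩

theorem empty : dLOfp11OrEmpty (BLinOrd.of (Fin 0)) :=
  ⟨LOfp.empty, ⟨fun a => a.elim0, fun a => a.elim0⟩, fun ⟨a⟩ => a.elim0⟩

theorem one : dLOfp11OrEmpty (BLinOrd.of (Fin 1)) :=
  ⟨LOfp.one, isDiscreteLO_of_succOrder (α := Fin 1),
    fun _ => ⟨hasMin_of_orderBot (α := Fin 1), hasMax_of_orderTop (α := Fin 1)⟩⟩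

theorem hasMax_iff_hasMin (h : dLOfp11OrEmpty X) : HasMax X.carrier ↔ HasMin X.carrier := by
  rcases isEmpty_or_nonempty X.carrier with _ | hne
  · exact iff_of_false (fun ⟨x, _⟩ => isEmptyElim x) (fun ⟨x, _⟩ => isEmptyElim x)
  · exact iff_of_true (h.2.2 hne).2 (h.2.2 hne).1

theorem sumLex (hX : dLOfp11OrEmpty X) (hY : dLOfp11OrEmpty Y) :
    dLOfp11OrEmpty (BLinOrd.of (X.carrier ⊕ₗ Y.carrier)) := by
  refine ⟨hX.1.add hY.1, isDiscreteLO_sumLex_iff.2 ⟨hX.2.1, hY.2.1,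
    fun hx hy => iff_of_true (hX.2.2 hx).2 (hY.2.2 hy).1⟩, fun hne => ⟨?_, ?_⟩⟩
  · rcases isEmpty_or_nonempty X.carrier with hx | hx
    · exact hasMin_sumLex_iff.2 (.inr ⟨hx, (hY.2.2 ((nonempty_sumLex_iff.1 hne).resolve_left
        (not_nonempty_iff.2 hx))).1⟩)
    · exact hasMin_sumLex_iff.2 (.inl (hX.2.2 hx).1)
  · rcases isEmpty_or_nonempty Y.carrier with hy | hy
    · exact hasMax_sumLex_iff.2 (.inr ⟨hy, (hX.2.2 ((nonempty_sumLex_iff.1 hne).resolve_right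
        (not_nonempty_iff.2 hy))).2⟩)
    · exact hasMax_sumLex_iff.2 (.inl (hY.2.2 hy).2)

theorem mulOmega_add_mulOmegaStar (hC : dLOfp11OrEmpty C) (hA : dLOfp11OrEmpty A)
    (hCA : IsEmpty C.carrier ↔ IsEmpty A.carrier) :
    dLOfp11OrEmpty (BLinOrd.of ((ℕ ×ₗ C.carrier) ⊕ₗ (ℕᵒᵈ ×ₗ A.carrier))) := by
  refine ⟨hC.1.mulOmega.add hA.1.mulOmegaStar, isDiscreteLO_sumLex_iff.2
    ⟨(isDiscreteLO_prodLex_iff isDiscreteLO_of_succOrder).2 ⟨hC.2.1, hC.hasMax_iff_hasMin⟩,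
      (isDiscreteLO_prodLex_iff isDiscreteLO_of_succOrder).2 ⟨hA.2.1, hA.hasMax_iff_hasMin⟩,
      fun _ _ => iff_of_false (fun h => not_hasMax (hasMax_prodLex_iff.1 h).1)
        (fun h => not_hasMin (hasMin_prodLex_iff.1 h).1)⟩, fun hne => ?_⟩
  have hCA' : Nonempty C.carrier ↔ Nonempty A.carrier := by
    rw [← not_iff_not, not_nonempty_iff, not_nonempty_iff]
    exact hCA
  have hAne : Nonempty A.carrier := (nonempty_sumLex_iff.1 hne).elim
    (fun h => hCA'.1 (nonempty_prodLex_iff.1 h).2) (fun h => (nonempty_prodLex_iff.1 h).2)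
  exact ⟨hasMin_sumLex_iff.2 (.inl (hasMin_prodLex_iff.2 ⟨hasMin_of_orderBot,
      (hC.2.2 (hCA'.2 hAne)).1⟩)),
    hasMax_sumLex_iff.2 (.inl (hasMax_prodLex_iff.2 ⟨hasMax_of_orderTop, (hA.2.2 hAne).2⟩))⟩

end dLOfp11OrEmpty

def HasOmegaDecomposition (X : BLinOrd) : Prop :=
  ∃ A B C : BLinOrd, dLOfp11OrEmpty A ∧ dLOfp11OrEmpty B ∧ dLOfp11OrEmpty C ∧
    (HasMin X.carrier ↔ IsEmpty A.carrier) ∧ (HasMax X.carrier ↔ IsEmpty C.carrier) ∧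
    Nonempty (X.carrier ≃o (ℕᵒᵈ ×ₗ A.carrier) ⊕ₗ (B.carrier ⊕ₗ ℕ ×ₗ C.carrier))

namespace HasOmegaDecomposition

open OrderIso Prod.Lex

variable {X Y : BLinOrd}

theorem of_orderIso (h : HasOmegaDecomposition X) (e : X.carrier ≃o Y.carrier) :
    HasOmegaDecomposition Y :=
  let ⟨A, B, C, hA, hB, hC, hmin, hmax, ⟨f⟩⟩ := h
  ⟨A, B, C, hA, hB, hC, e.hasMin_iff.symm.trans hmin, e.hasMax_iff.symm.trans hmax,
    ⟨e.symm.trans f⟩⟩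

theorem one : HasOmegaDecomposition (BLinOrd.of (Fin 1)) := by
  have : IsEmpty (ℕᵒᵈ ×ₗ Fin 0) := inferInstanceAs (IsEmpty (ℕᵒᵈ × Fin 0))
  have : IsEmpty (ℕ ×ₗ Fin 0) := inferInstanceAs (IsEmpty (ℕ × Fin 0))
  exact ⟨.of (Fin 0), .of (Fin 1), .of (Fin 0), .empty, .one, .empty,
    iff_of_true (hasMin_of_orderBot (α := Fin 1)) Fin.isEmpty',
    iff_of_true (hasMax_of_orderTop (α := Fin 1)) Fin.isEmpty',
    ⟨show Fin 1 ≃o (ℕᵒᵈ ×ₗ Fin 0) ⊕ₗ (Fin 1 ⊕ₗ ℕ ×ₗ Fin 0) from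
      (emptySumLex.trans sumLexEmpty).symm⟩⟩

theorem sumLex [Nonempty X.carrier] [Nonempty Y.carrier] (hX : HasOmegaDecomposition X)
    (hY : HasOmegaDecomposition Y) (hXY : HasMax X.carrier ↔ HasMin Y.carrier) :
    HasOmegaDecomposition (BLinOrd.of (X.carrier ⊕ₗ Y.carrier)) := by
  obtain ⟨A, B, C, hA, hB, hC, hminX, hmaxX, ⟨f⟩⟩ := hX
  obtain ⟨A', B', C', hA', hB', hC', hminY, hmaxY, ⟨g⟩⟩ := hY
  have hCA' : IsEmpty C.carrier ↔ IsEmpty A'.carrier := hmaxX.symm.trans (hXY.trans hminY)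
  refine ⟨A, .of (B.carrier ⊕ₗ (((ℕ ×ₗ C.carrier) ⊕ₗ (ℕᵒᵈ ×ₗ A'.carrier)) ⊕ₗ B'.carrier)), C',
    hA, hB.sumLex ((hC.mulOmega_add_mulOmegaStar hA' hCA').sumLex hB'), hC', ?_, ?_,
    ⟨(sumLexCongr f g).trans <| (sumLexAssoc _ _ _).trans <| sumLexCongr (.refl _) <|
      (sumLexAssoc _ _ _).trans <| (sumLexCongr (.refl _) <|
        (sumLexAssoc _ _ _).symm.trans (sumLexAssoc _ _ _).symm).trans (sumLexAssoc _ _ _).symm⟩⟩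
  · exact (hasMin_sumLex_iff.trans (or_iff_left fun h => not_isEmpty_of_nonempty _ h.1)).trans
      hminX
  · exact (hasMax_sumLex_iff.trans (or_iff_left fun h => not_isEmpty_of_nonempty _ h.1)).trans
      hmaxY

theorem mulOmega [hne : Nonempty X.carrier] (hX : HasOmegaDecomposition X)
    (hmm : HasMax X.carrier ↔ HasMin X.carrier) :
    HasOmegaDecomposition (BLinOrd.of (ℕ ×ₗ X.carrier)) := by
  obtain ⟨A, B, C, hA, hB, hC, hmin, hmax, ⟨f⟩⟩ := hX
  refine ⟨A, B, .of (((ℕ ×ₗ C.carrier) ⊕ₗ (ℕᵒᵈ ×ₗ A.carrier)) ⊕ₗ B.carrier), hA, hB,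
    (hC.mulOmega_add_mulOmegaStar hA (hmax.symm.trans (hmm.trans hmin))).sumLex hB,
    hasMin_prodLex_iff.trans ((and_iff_right hasMin_of_orderBot).trans hmin),
    iff_of_false (fun h => not_hasMax (hasMax_prodLex_iff.1 h).1) ?_,
    ⟨(prodLexCongr (.refl ℕ) (f.trans (sumLexAssoc _ _ _).symm)).trans <|
      (natProdLexSumLexRotate _ _).trans <|
        (sumLexCongr (.refl _) (prodLexCongr (.refl ℕ) (sumLexAssoc _ _ _).symm)).trans
          (sumLexAssoc _ _ _)⟩⟩
  have := nonempty_sumLex_iff.1 (f.toEquiv.nonempty_congr.1 hne)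
  simp only [nonempty_sumLex_iff, nonempty_prodLex_iff] at this
  simp only [BLinOrd.of, not_isEmpty_iff, nonempty_sumLex_iff, nonempty_prodLex_iff]
  tauto

theorem mulOmegaStar [hne : Nonempty X.carrier] (hX : HasOmegaDecomposition X)
    (hmm : HasMax X.carrier ↔ HasMin X.carrier) :
    HasOmegaDecomposition (BLinOrd.of (ℕᵒᵈ ×ₗ X.carrier)) := by
  obtain ⟨A, B, C, hA, hB, hC, hmin, hmax, ⟨f⟩⟩ := hX
  refine ⟨.of (B.carrier ⊕ₗ ((ℕ ×ₗ C.carrier) ⊕ₗ (ℕᵒᵈ ×ₗ A.carrier))), B, C,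
    hB.sumLex (hC.mulOmega_add_mulOmegaStar hA (hmax.symm.trans (hmm.trans hmin))), hB, hC,
    iff_of_false (fun h => not_hasMin (hasMin_prodLex_iff.1 h).1) ?_,
    hasMax_prodLex_iff.trans ((and_iff_right hasMax_of_orderTop).trans hmax),
    ⟨(prodLexCongr (.refl ℕᵒᵈ) f).trans <| (natDualProdLexSumLexRotate _ _).trans <|
      sumLexCongr (prodLexCongr (.refl ℕᵒᵈ) (sumLexAssoc _ _ _)) (.refl _)⟩⟩
  have := nonempty_sumLex_iff.1 (f.toEquiv.nonempty_congr.1 hne)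
  simp only [nonempty_sumLex_iff, nonempty_prodLex_iff] at this
  simp only [BLinOrd.of, not_isEmpty_iff, nonempty_sumLex_iff, nonempty_prodLex_iff]
  tauto

end HasOmegaDecomposition

theorem LOfp.hasOmegaDecomposition {X : BLinOrd} (hfp : LOfp X) (hd : IsDiscreteLO X.carrier)
    (hne : Nonempty X.carrier) : HasOmegaDecomposition X := by
  induction hfp with
  | empty => exact hne.some.elim0
  | one => exact .one
  | iso _ e ih =>
    obtain ⟨e⟩ := e
    exact (ih (e.isDiscreteLO_iff.2 hd) (e.toEquiv.nonempty_congr.2 hne)).of_orderIso e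
  | @add X Y _ _ ihX ihY =>
    obtain ⟨hdX, hdY, hXY⟩ := isDiscreteLO_sumLex_iff.1 hd
    rcases isEmpty_or_nonempty X.carrier with hX | hX
    · have hY := (nonempty_sumLex_iff.1 hne).resolve_left (not_nonempty_iff.2 hX)
      exact (ihY hdY hY).of_orderIso OrderIso.emptySumLex.symm
    rcases isEmpty_or_nonempty Y.carrier with hY | hY
    · have hX := (nonempty_sumLex_iff.1 hne).resolve_right (not_nonempty_iff.2 hY)
      exact (ihX hdX hX).of_orderIso OrderIso.sumLexEmpty.symm
    exact (ihX hdX hX).sumLex (ihY hdY hY) (hXY hX hY)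
  | mulOmega _ ih =>
    obtain ⟨hdX, hmm⟩ := (isDiscreteLO_prodLex_iff isDiscreteLO_of_succOrder).1 hd
    have := (nonempty_prodLex_iff.1 hne).2
    exact (ih hdX this).mulOmega hmm
  | mulOmegaStar _ ih =>
    obtain ⟨hdX, hmm⟩ := (isDiscreteLO_prodLex_iff isDiscreteLO_of_succOrder).1 hd
    have := (nonempty_prodLex_iff.1 hne).2
    exact (ih hdX this).mulOmegaStar hmm

/-- a nonempty discrete finitely presented linear order with no minimum and
no maximum is isomorphic to `L₁·ω* + L₂ + L₃·ω` with `L₁, L₃ ∈ dLO_fp¹¹` and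
`L₂ ∈ dLO_fp¹¹ ∪ {𝟎}`. -/
theorem dLOfp00_structure (X : BLinOrd) (hne : Nonempty X.carrier) (hfp : LOfp X)
    (hdisc : IsDiscreteLO X.carrier)
    (hnomin : ∀ a : X.carrier, ∃ b, b < a)
    (hnomax : ∀ a : X.carrier, ∃ b, a < b) :
    ∃ L1 L2 L3 : BLinOrd, dLOfp11 L1 ∧ dLOfp11 L3 ∧
      (dLOfp11 L2 ∨ IsEmpty L2.carrier) ∧
      Nonempty (X.carrier ≃o
        ((ℕᵒᵈ ×ₗ L1.carrier) ⊕ₗ (L2.carrier ⊕ₗ (ℕ ×ₗ L3.carrier)))) := by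
  have : NoMinOrder X.carrier := ⟨hnomin⟩
  have : NoMaxOrder X.carrier := ⟨hnomax⟩
  obtain ⟨A, B, C, hA, hB, hC, hmin, hmax, e⟩ := hfp.hasOmegaDecomposition hdisc hne
  refine ⟨A, B, C, hA.dLOfp11 ?_, hC.dLOfp11 ?_,
    (isEmpty_or_nonempty B.carrier).symm.imp_left hB.dLOfp11, e⟩
  · exact not_isEmpty_iff.1 (mt hmin.2 not_hasMin)
  · exact not_isEmpty_iff.1 (mt hmax.2 not_hasMax)
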